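/- arXiv:2012.09280 — 2 statements merged into one kernel-verified Lean document; each statement's English description precedes it below -/
import Mathlib

section
/- Let 1 ≤ r ≤ k and C be positive integers and let ε > 0. Then there is a constant c = c(k,C,ε) > 0 such that the following holds. Let H be a weighted k-uniform hypergraph on [N] with Δ_r(H) ≤ C, and let t ∈ (0,1). Then for all p ≤ t and all positive integers ℓ ≤ c·t^{k/r}·N, E[ N^H(B_p)^ℓ ] ≤ max{ μ^ℓ·(1+ε/2)^ℓ , (ε·t^k·N^r/2)^ℓ }, where μ = p^k·e(H). -/
open Finset Filter MeasureTheory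
open scoped Classical

noncomputable section

namespace Paper

/-- `a ≪ b` : `a N / b N → 0`. -/
def smallo (a b : ℕ → ℝ) : Prop :=
  Filter.Tendsto (fun n => a n / b n) Filter.atTop (nhds 0)

variable {N : ℕ}

/-- `N^H(B)` : sum of weights of edges of the weighted hypergraph `w` contained in `B`. -/
def edgeCount (w : Finset (Fin N) → ℝ) (B : Finset (Fin N)) : ℝ :=
  ∑ e ∈ B.powerset, w e

/-- `e(H)` : total edge weight. -/
def totalWeight (w : Finset (Fin N) → ℝ) : ℝ :=
  ∑ e : Finset (Fin N), w e

/-- `d_H(x)` : weighted degree of a vertex. -/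
def vdeg (w : Finset (Fin N) → ℝ) (x : Fin N) : ℝ :=
  ∑ e ∈ Finset.univ.filter (fun e : Finset (Fin N) => x ∈ e), w e

/-- `d_H(R)` : weighted degree of a set of vertices. -/
def degSet (w : Finset (Fin N) → ℝ) (R : Finset (Fin N)) : ℝ :=
  ∑ e ∈ Finset.univ.filter (fun e : Finset (Fin N) => R ⊆ e), w e

/-- `d̄(H)` : average degree. -/
def avgDeg (w : Finset (Fin N) → ℝ) : ℝ :=
  (∑ x : Fin N, vdeg w x) / N

/-- `σ²(H)` : degree variance. -/
def degVar (w : Finset (Fin N) → ℝ) : ℝ :=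
  (∑ x : Fin N, (vdeg w x - avgDeg w) ^ 2) / N

/-- Probability of an event in the binomial model `B_p`. -/
def probBp (N : ℕ) (p : ℝ) (E : Finset (Fin N) → Prop) : ℝ :=
  ∑ B : Finset (Fin N), if E B then p ^ B.card * (1 - p) ^ (N - B.card) else 0

/-- Expectation in the binomial model `B_p`. -/
def expBp (N : ℕ) (p : ℝ) (f : Finset (Fin N) → ℝ) : ℝ :=
  ∑ B : Finset (Fin N), p ^ B.card * (1 - p) ^ (N - B.card) * f B

/-- Probability of an event in the uniform model `B_m`. -/
def probBm (N m : ℕ) (E : Finset (Fin N) → Prop) : ℝ :=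
  ((Finset.univ.filter (fun B : Finset (Fin N) => B.card = m ∧ E B)).card : ℝ) /
    (N.choose m : ℝ)

/-- Expectation in the uniform model `B_m`. -/
def expBm (N m : ℕ) (f : Finset (Fin N) → ℝ) : ℝ :=
  (∑ B ∈ Finset.univ.filter (fun B : Finset (Fin N) => B.card = m), f B) / (N.choose m : ℝ)

/-- `D^H(B)` in the uniform model: deviation of the edge count from its `B_m`-mean `L^H(m)`. -/
def devBm (w : Finset (Fin N) → ℝ) (m : ℕ) (B : Finset (Fin N)) : ℝ :=
  edgeCount w B - expBm N m (edgeCount w)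

/-- Probability of an event under a uniformly random permutation of `[N]`. -/
def probPerm (N : ℕ) (E : Equiv.Perm (Fin N) → Prop) : ℝ :=
  ((Finset.univ.filter E).card : ℝ) / (N.factorial : ℝ)

/-- `B_i` : the set of the first `i` elements of the permutation `π`
(`π j` is the `(j+1)`-st chosen element). -/
def prefixSet (π : Equiv.Perm (Fin N)) (i : ℕ) : Finset (Fin N) :=
  Finset.univ.filter (fun v => (π.symm v : ℕ) < i)

/-- `A_ℓ(B_i)` where `B = B_{i-1}` and `x = b_i` : the number of pairs `(S, f)` with
`|S| = ℓ`, `x ∈ S`, `f` an edge, `S ⊆ f ∩ B_i`, counted with edge weights. -/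
def Aval (w : Finset (Fin N) → ℝ) (ℓ : ℕ) (B : Finset (Fin N)) (x : Fin N) : ℝ :=
  ∑ f : Finset (Fin N),
    w f * ((f.powerset.filter (fun S => S.card = ℓ ∧ x ∈ S ∧ S ⊆ insert x B)).card : ℝ)

/-- `X_ℓ(B_i)` where `B = B_{i-1}` and `x = b_i` : the centered increment
`A_ℓ(B_i) - E[A_ℓ(B_i) | B_{i-1}]` (the next element is uniform on the complement of `B`). -/
def Xval (w : Finset (Fin N) → ℝ) (ℓ : ℕ) (B : Finset (Fin N)) (x : Fin N) : ℝ :=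
  Aval w ℓ B x - (∑ y ∈ Bᶜ, Aval w ℓ B y) / (Bᶜ.card : ℝ)

/-- `Y_ℓ(B_i)` where `B = B_{i-1}` (so `B.card = i - 1`) and `x = b_i`. -/
def Yval (w : Finset (Fin N) → ℝ) (k ℓ : ℕ) (B : Finset (Fin N)) (x : Fin N) : ℝ :=
  Xval w ℓ B x - ((k - 1).choose (ℓ - 1) : ℝ) *
      ((B.card.descFactorial (ℓ - 1) : ℝ) / ((N - 1).descFactorial (ℓ - 1) : ℝ)) *
    Xval w 1 B x

/-- The degree process `Λ^H(B_m) = ∑_{i=1}^m (t^{k-1}(1-t)/(1-s)) X_1(B_i)`, `s = i/N`. -/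
def Lam (w : Finset (Fin N) → ℝ) (k m : ℕ) (π : Equiv.Perm (Fin N)) : ℝ :=
  ∑ i : Fin N, if (i : ℕ) < m then
      (((m : ℝ) / N) ^ (k - 1) * (1 - (m : ℝ) / N) / (1 - ((i : ℕ) + 1) / (N : ℝ))) *
        Xval w 1 (prefixSet π (i : ℕ)) (π i)
    else 0

/-- `E[X_1(B_i)² | B_{i-1}]` as a function of `B = B_{i-1}`. -/
def condVarX1 (w : Finset (Fin N) → ℝ) (B : Finset (Fin N)) : ℝ :=
  (∑ y ∈ Bᶜ, (Xval w 1 B y) ^ 2) / (Bᶜ.card : ℝ)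

/-- The quadratic variation `V^H(m)` of the process `Λ^H`. -/
def quadVar (w : Finset (Fin N) → ℝ) (k m : ℕ) (π : Equiv.Perm (Fin N)) : ℝ :=
  ∑ i : Fin N, if (i : ℕ) < m then
      (((m : ℝ) / N) ^ (k - 1) * (1 - (m : ℝ) / N) / (1 - ((i : ℕ) + 1) / (N : ℝ))) ^ 2 *
        condVarX1 w (prefixSet π (i : ℕ))
    else 0

/-- Indicator weight function of an unweighted hypergraph with edge set `E`. -/
def indW (E : Finset (Finset (Fin N))) : Finset (Fin N) → ℝ :=
  fun e => if e ∈ E then 1 else 0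

/-- The weight function of the hypergraph `H(x)_j` obtained from the link `H(x)`:
a `j`-set `S` avoiding `x` gets weight the number of edges `e` of `H` with `x ∈ e`, `S ⊆ e`. -/
def linkW (E : Finset (Finset (Fin N))) (x : Fin N) (j : ℕ) : Finset (Fin N) → ℝ :=
  fun S => if S.card = j ∧ x ∉ S then ((E.filter (fun e => x ∈ e ∧ S ⊆ e)).card : ℝ) else 0

/-- Expected edge count of a weighted hypergraph over a uniformly random `i`-element subset of
`[N] \ {x}`. -/
def expLink (w : Finset (Fin N) → ℝ) (x : Fin N) (i : ℕ) : ℝ :=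
  (∑ B ∈ (Finset.univ.erase x).powerset.filter (fun B : Finset (Fin N) => B.card = i),
      edgeCount w B) / ((N - 1).choose i : ℝ)

/-- `e` is an increasing `k`-term arithmetic progression `{a, a+d, ..., a+(k-1)d}`. -/
def isAPk (k : ℕ) (e : Finset (Fin N)) : Prop :=
  ∃ a d : ℕ, 0 < d ∧ a + (k - 1) * d < N ∧
    ∀ v : Fin N, v ∈ e ↔ ∃ j < k, (v : ℕ) = a + j * d

/-- The (indicator weight function of the) hypergraph `H^k` of increasing `k`-APs in `[N]`. -/
def apW (N k : ℕ) : Finset (Fin N) → ℝ :=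
  fun e => if isAPk k e then 1 else 0

/-- The constant `θ_k`. -/
def thetaAP (k : ℕ) : ℝ :=
  (1 / (3 * ((k : ℝ) - 1) ^ 2)) *
    ((k : ℝ) - 3 * (k : ℝ) ^ 2 / 4 +
      ∑ i ∈ Finset.Icc 1 k, ∑ j ∈ Finset.Icc (i + 1) k,
        (((k : ℝ) - 1) ^ 2 - ((k : ℝ) - (j : ℝ)) ^ 2 - ((i : ℝ) - 1) ^ 2) /
          (((j : ℝ) - 1) * ((k : ℝ) - (i : ℝ))))

/-- The constant `γ_k`. -/
def gammaAP (k : ℕ) : ℝ :=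
  (4 / 3) *
    ((k : ℝ) +
      ∑ i ∈ Finset.Icc 1 k, ∑ j ∈ Finset.Icc (i + 1) k,
        (((k : ℝ) - 1) ^ 2 - ((k : ℝ) - (j : ℝ)) ^ 2 - ((i : ℝ) - 1) ^ 2) /
          (((j : ℝ) - 1) * ((k : ℝ) - (i : ℝ))))

/-- `e` is a set of four pairwise distinct elements with `x + y = z + w`. -/
def isSidon (e : Finset (Fin N)) : Prop :=
  ∃ x y z w : Fin N, e = {x, y, z, w} ∧ e.card = 4 ∧ (x : ℕ) + (y : ℕ) = (z : ℕ) + (w : ℕ)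

/-- The (indicator weight function of the) Sidon hypergraph `H^S`. -/
def sidonW (N : ℕ) : Finset (Fin N) → ℝ :=
  fun e => if isSidon e then 1 else 0

/-- The standard Gaussian cumulative distribution function. -/
def gaussCDF (x : ℝ) : ℝ :=
  ∫ y in Set.Iic x, Real.exp (-(y ^ 2) / 2) / Real.sqrt (2 * Real.pi)

/-! Expanding `N^H(B_p)^ℓ` one edge at a time, each new factor contributes at most
`max_{|A| ≤ ℓk} ∑_f w_f p^{|f \ A|}`, where `A` is the union of the edges already chosen; hence
`E[N^H(B_p)^ℓ] ≤ (μ + D)^ℓ` for any `D` bounding the contribution of the edges meeting `A`.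
The edges meeting `A` in `j ≥ 1` vertices contain one of at most `|A|^j` sets of size `j`, each of
degree at most `C N^{r-j}`, and `p^{k-j} ≤ t^{k-j} ≤ t^{k(r-j)/r}`; with `|A| ≤ ℓk ≤ ckt^{k/r}N`
this gives `D ≤ C r c k t^k N^r`. Finally either `D ≤ εμ/2`, or `μ + D ≤ (1 + 2/ε) D`, which is at
most `ε t^k N^r / 2` for small `c`. -/

lemma card_powersetCard_le_pow {α : Type*} (n : ℕ) (s : Finset α) :
    (#(powersetCard n s) : ℝ) ≤ (#s : ℝ) ^ n := by
  rw [card_powersetCard]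
  exact_mod_cast Nat.choose_le_pow _ _

lemma sum_range_pow_succ_mul_pow_le {a m δ : ℝ} (r : ℕ) (ha : 0 ≤ a) (hm : 0 ≤ m) (hδ : 0 ≤ δ)
    (hδ1 : δ ≤ 1) (ham : a ≤ δ * m) :
    ∑ j ∈ range r, a ^ (j + 1) * m ^ (r - (j + 1)) ≤ r * δ * m ^ r := by
  have hterm : ∀ j ∈ range r, a ^ (j + 1) * m ^ (r - (j + 1)) ≤ δ * m ^ r := by
    intro j hj
    calc a ^ (j + 1) * m ^ (r - (j + 1)) ≤ (δ * m) ^ (j + 1) * m ^ (r - (j + 1)) := by gcongr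
      _ = δ ^ (j + 1) * m ^ r := by
          rw [mul_pow, mul_assoc, ← pow_add, Nat.add_sub_cancel' (mem_range.1 hj)]
      _ ≤ δ * m ^ r := by
          gcongr
          exact pow_le_of_le_one hδ hδ1 j.succ_ne_zero
  simpa [mul_assoc] using sum_le_card_nsmul _ _ _ hterm

lemma pow_sub_le_rpow_div_pow_sub {t : ℝ} {i r k : ℕ} (ht0 : 0 < t) (ht1 : t ≤ 1) (hr : 0 < r)
    (hir : i ≤ r) (hrk : r ≤ k) :
    t ^ (k - i) ≤ (t ^ ((k : ℝ) / r)) ^ (r - i) := by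
  rw [← Real.rpow_natCast, ← Real.rpow_natCast, ← Real.rpow_mul ht0.le]
  refine Real.rpow_le_rpow_of_exponent_ge ht0 ht1 ?_
  have hr' : (0 : ℝ) < r := by exact_mod_cast hr
  have hkr : (r : ℝ) ≤ k := by exact_mod_cast hrk
  rw [Nat.cast_sub hir, Nat.cast_sub (hir.trans hrk), div_mul_eq_mul_div, div_le_iff₀ hr']
  nlinarith [(Nat.cast_nonneg i : (0 : ℝ) ≤ i)]

lemma add_le_max_mul_one_add_half {μ D T ε : ℝ} (hε : 0 < ε) (hDT : (2 + ε) * D ≤ ε * T) :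
    μ + D ≤ max (μ * (1 + ε / 2)) T := by
  rcases le_or_gt D (ε / 2 * μ) with hsmall | hlarge
  · exact le_max_of_le_left (by linarith)
  · exact le_max_of_le_right (le_of_mul_le_mul_left (by linarith) hε)

lemma pow_le_max_pow_of_le_max {x a b : ℝ} (hx : 0 ≤ x) (h : x ≤ max a b) (n : ℕ) :
    x ^ n ≤ max (a ^ n) (b ^ n) := by
  rcases le_max_iff.1 h with ha | hb
  · exact le_max_of_le_left (pow_le_pow_left₀ hx ha n)
  · exact le_max_of_le_right (pow_le_pow_left₀ hx hb n)

section Hypergraph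

variable {N k r : ℕ} {C : ℝ} {w : Finset (Fin N) → ℝ}

lemma sum_le_sum_degSet_of_forall_exists_subset {ι : Type*} (hw : ∀ e, 0 ≤ w e)
    (F : Finset (Finset (Fin N))) (I : Finset ι) (g : ι → Finset (Fin N))
    (hcover : ∀ f ∈ F, w f ≠ 0 → ∃ i ∈ I, g i ⊆ f) :
    ∑ f ∈ F, w f ≤ ∑ i ∈ I, degSet w (g i) := by
  have hnonneg : ∀ f, ∀ i ∈ I, 0 ≤ if g i ⊆ f then w f else 0 :=
    fun f _ _ => ite_nonneg (hw f) le_rfl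
  calc ∑ f ∈ F, w f ≤ ∑ f ∈ F, ∑ i ∈ I, if g i ⊆ f then w f else 0 := by
        refine sum_le_sum fun f hf => ?_
        rcases eq_or_ne (w f) 0 with h0 | h0
        · exact h0.le.trans (sum_nonneg (hnonneg f))
        · obtain ⟨i, hi, hgi⟩ := hcover f hf h0
          calc w f = if g i ⊆ f then w f else 0 := (if_pos hgi).symm
            _ ≤ _ := single_le_sum (hnonneg f) hi
    _ ≤ ∑ f, ∑ i ∈ I, if g i ⊆ f then w f else 0 :=
        sum_le_sum_of_subset_of_nonneg (subset_univ F) fun f _ _ => sum_nonneg (hnonneg f)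
    _ = ∑ i ∈ I, degSet w (g i) := by
        rw [sum_comm]
        simp only [degSet, sum_filter]

lemma degSet_le_of_card_le (hw : ∀ e, 0 ≤ w e) (hk : ∀ e, w e ≠ 0 → #e = k) (hrk : r ≤ k)
    (hC : 0 ≤ C) (hdeg : ∀ R : Finset (Fin N), #R = r → degSet w R ≤ C)
    {S : Finset (Fin N)} (hSr : #S ≤ r) :
    degSet w S ≤ C * N ^ (r - #S) := by
  have hcover : ∀ f ∈ univ.filter (S ⊆ ·), w f ≠ 0 →
      ∃ U ∈ powersetCard (r - #S) Sᶜ, S ∪ U ⊆ f := by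
    intro f hf hf0
    have hSf : S ⊆ f := (mem_filter.1 hf).2
    obtain ⟨U, hUf, hU⟩ := exists_subset_card_eq (s := f \ S) (n := r - #S)
      (by rw [card_sdiff_of_subset hSf, hk f hf0]; omega)
    refine ⟨U, mem_powersetCard.2 ⟨fun x hx => ?_, hU⟩, union_subset hSf (hUf.trans sdiff_subset)⟩
    exact mem_compl.2 (mem_sdiff.1 (hUf hx)).2
  have hcard : ∀ U ∈ powersetCard (r - #S) Sᶜ, #(S ∪ U) = r := by
    intro U hU
    obtain ⟨hUS, hU⟩ := mem_powersetCard.1 hU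
    rw [card_union_of_disjoint (disjoint_left.2 fun x hxS hxU => mem_compl.1 (hUS hxU) hxS), hU]
    omega
  calc degSet w S = ∑ f ∈ univ.filter (S ⊆ ·), w f := rfl
    _ ≤ ∑ U ∈ powersetCard (r - #S) Sᶜ, degSet w (S ∪ U) :=
        sum_le_sum_degSet_of_forall_exists_subset hw _ _ _ hcover
    _ ≤ #(powersetCard (r - #S) Sᶜ) * C := by
        simpa using sum_le_card_nsmul _ _ _ fun U hU => hdeg _ (hcard U hU)
    _ ≤ (N : ℝ) ^ (r - #S) * C := by
        gcongr
        refine (card_powersetCard_le_pow _ _).trans (pow_le_pow_left₀ (by positivity) ?_ _)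
        exact_mod_cast (card_le_univ _).trans_eq (Fintype.card_fin N)
    _ = C * N ^ (r - #S) := mul_comm _ _

lemma sum_weight_le_of_le_card_inter (hw : ∀ e, 0 ≤ w e) (hk : ∀ e, w e ≠ 0 → #e = k) (hrk : r ≤ k)
    (hC : 0 ≤ C) (hdeg : ∀ R : Finset (Fin N), #R = r → degSet w R ≤ C)
    {j : ℕ} (hjr : j ≤ r) (A : Finset (Fin N)) :
    ∑ f ∈ univ.filter (fun f => j ≤ #(f ∩ A)), w f ≤ C * #A ^ j * N ^ (r - j) := by
  have hcover : ∀ f ∈ univ.filter (fun f => j ≤ #(f ∩ A)), w f ≠ 0 →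
      ∃ S ∈ powersetCard j A, id S ⊆ f := by
    intro f hf _
    obtain ⟨S, hS, hSj⟩ := exists_subset_card_eq (mem_filter.1 hf).2
    exact ⟨S, mem_powersetCard.2 ⟨hS.trans inter_subset_right, hSj⟩, hS.trans inter_subset_left⟩
  calc _ ≤ ∑ S ∈ powersetCard j A, degSet w (id S) :=
        sum_le_sum_degSet_of_forall_exists_subset hw _ _ _ hcover
    _ ≤ #(powersetCard j A) * (C * N ^ (r - j)) := by
        refine (sum_le_card_nsmul _ _ _ fun S hS => ?_).trans_eq (nsmul_eq_mul _ _)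
        obtain ⟨-, hSj⟩ := mem_powersetCard.1 hS
        simpa [hSj] using degSet_le_of_card_le hw hk hrk hC hdeg (hSj.trans_le hjr)
    _ ≤ #A ^ j * (C * N ^ (r - j)) := by
        gcongr
        exact card_powersetCard_le_pow _ _
    _ = C * #A ^ j * N ^ (r - j) := by ring

lemma pow_card_sdiff_le {p t : ℝ} (hp : 0 ≤ p) (hpt : p ≤ t) (ht0 : 0 < t) (ht1 : t ≤ 1)
    (hr : 0 < r) (hrk : r ≤ k) {f A : Finset (Fin N)} (hf : #f = k) :
    p ^ #(f \ A) ≤ (t ^ ((k : ℝ) / r)) ^ (r - min #(f ∩ A) r) := by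
  have hsdiff : #(f \ A) = k - #(f ∩ A) := by
    rw [← sdiff_inter_self_left, card_sdiff_of_subset inter_subset_left, hf]
  rcases le_total #(f ∩ A) r with hle | hle
  · rw [min_eq_left hle, hsdiff]
    exact (pow_le_pow_left₀ hp hpt _).trans (pow_sub_le_rpow_div_pow_sub ht0 ht1 hr hle hrk)
  · rw [min_eq_right hle, Nat.sub_self, pow_zero]
    exact pow_le_one₀ hp (hpt.trans ht1)

lemma sum_mul_pow_card_sdiff_le (hw : ∀ e, 0 ≤ w e) (hk : ∀ e, w e ≠ 0 → #e = k) (hr : 0 < r)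
    (hrk : r ≤ k) (hC : 0 ≤ C) (hdeg : ∀ R : Finset (Fin N), #R = r → degSet w R ≤ C)
    {p t : ℝ} (hp : 0 ≤ p) (hpt : p ≤ t) (ht0 : 0 < t) (ht1 : t ≤ 1) (A : Finset (Fin N)) :
    ∑ f, w f * p ^ #(f \ A) ≤ p ^ k * totalWeight w +
      C * ∑ j ∈ range r, (#A : ℝ) ^ (j + 1) * (t ^ ((k : ℝ) / r) * N) ^ (r - (j + 1)) := by
  set s := t ^ ((k : ℝ) / r)
  set fiber := fun j => univ.filter (fun f : Finset (Fin N) => min #(f ∩ A) r = j)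
  have hdisjoint : ∑ f ∈ fiber 0, w f * p ^ #(f \ A) ≤ p ^ k * totalWeight w := by
    calc ∑ f ∈ fiber 0, w f * p ^ #(f \ A) = ∑ f ∈ fiber 0, w f * p ^ k := by
          refine sum_congr rfl fun f hf => ?_
          rcases eq_or_ne (w f) 0 with h0 | h0
          · simp [h0]
          have hfA : #(f ∩ A) = 0 := by have := (mem_filter.1 hf).2; omega
          rw [sdiff_eq_self_of_disjoint (disjoint_iff_inter_eq_empty.2 (card_eq_zero.1 hfA)),
            hk f h0]
      _ ≤ ∑ f, w f * p ^ k :=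
          sum_le_sum_of_subset_of_nonneg (subset_univ _) fun f _ _ => by positivity [hw f]
      _ = p ^ k * totalWeight w := by rw [totalWeight, mul_sum]; simp only [mul_comm]
  have hmeeting : ∀ j < r, ∑ f ∈ fiber (j + 1), w f * p ^ #(f \ A) ≤
      C * ((#A : ℝ) ^ (j + 1) * (s * N) ^ (r - (j + 1))) := by
    intro j hj
    calc ∑ f ∈ fiber (j + 1), w f * p ^ #(f \ A)
        ≤ ∑ f ∈ fiber (j + 1), w f * s ^ (r - (j + 1)) := by
          refine sum_le_sum fun f hf => ?_
          rcases eq_or_ne (w f) 0 with h0 | h0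
          · simp [h0]
          rw [← (mem_filter.1 hf).2]
          exact mul_le_mul_of_nonneg_left (pow_card_sdiff_le hp hpt ht0 ht1 hr hrk (hk f h0)) (hw f)
      _ = (∑ f ∈ fiber (j + 1), w f) * s ^ (r - (j + 1)) := (sum_mul _ _ _).symm
      _ ≤ (∑ f ∈ univ.filter (fun f => j + 1 ≤ #(f ∩ A)), w f) * s ^ (r - (j + 1)) := by
          refine mul_le_mul_of_nonneg_right (sum_le_sum_of_subset_of_nonneg
            (fun f hf => mem_filter.2 ⟨mem_univ f, ?_⟩) fun f _ _ => hw f) (by positivity)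
          have := (mem_filter.1 hf).2
          omega
      _ ≤ (C * #A ^ (j + 1) * N ^ (r - (j + 1))) * s ^ (r - (j + 1)) := by
          gcongr
          exact sum_weight_le_of_le_card_inter hw hk hrk hC hdeg hj A
      _ = C * ((#A : ℝ) ^ (j + 1) * (s * N) ^ (r - (j + 1))) := by ring
  have hmaps : ∀ f ∈ (univ : Finset (Finset (Fin N))), min #(f ∩ A) r ∈ range (r + 1) :=
    fun f _ => mem_range.2 (Nat.lt_succ_of_le (min_le_right _ _))
  rw [← sum_fiberwise_of_maps_to hmaps, sum_range_succ', add_comm, mul_sum]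
  exact add_le_add hdisjoint (sum_le_sum fun j hj => hmeeting j (mem_range.1 hj))

lemma sum_mul_pow_card_sdiff_le_of_card_le (hw : ∀ e, 0 ≤ w e) (hk : ∀ e, w e ≠ 0 → #e = k)
    (hr : 0 < r) (hrk : r ≤ k) (hC : 0 ≤ C) (hdeg : ∀ R : Finset (Fin N), #R = r → degSet w R ≤ C)
    {p t δ : ℝ} (hp : 0 ≤ p) (hpt : p ≤ t) (ht0 : 0 < t) (ht1 : t ≤ 1) (hδ0 : 0 ≤ δ)
    (hδ1 : δ ≤ 1) {A : Finset (Fin N)} (hA : #A ≤ δ * (t ^ ((k : ℝ) / r) * N)) :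
    ∑ f, w f * p ^ #(f \ A) ≤ p ^ k * totalWeight w + C * (r * δ * (t ^ k * N ^ r)) := by
  have hsN : (t ^ ((k : ℝ) / r) * N) ^ r = t ^ k * N ^ r := by
    rw [mul_pow, ← Real.rpow_natCast (t ^ _), ← Real.rpow_mul ht0.le,
      div_mul_cancel₀ _ (by positivity), Real.rpow_natCast]
  refine (sum_mul_pow_card_sdiff_le hw hk hr hrk hC hdeg hp hpt ht0 ht1 A).trans
    (add_le_add_right (mul_le_mul_of_nonneg_left ?_ hC) _)
  rw [← hsN]
  exact sum_range_pow_succ_mul_pow_le r (by positivity) (by positivity) hδ0 hδ1 hA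

end Hypergraph

section BinomialModel

variable {N : ℕ}

lemma expBp_ite_subset_one (p : ℝ) (A : Finset (Fin N)) :
    expBp N p (fun B => if A ⊆ B then 1 else 0) = p ^ #A := by
  have hsupersets : univ.filter (A ⊆ ·) = (univ \ A).powerset.image (A ∪ ·) := by
    rw [← Icc_eq_image_powerset (subset_univ A)]
    ext B
    simp
  have hdisj : ∀ T ∈ (univ \ A).powerset, Disjoint A T :=
    fun T hT => disjoint_sdiff.mono_right (mem_powerset.1 hT)
  have hinj : Set.InjOn (A ∪ ·) ((univ \ A).powerset : Set (Finset (Fin N))) := by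
    intro T hT T' hT' hTT'
    calc T = (A ∪ T) \ A := (union_sdiff_cancel_left (hdisj T hT)).symm
      _ = (A ∪ T') \ A := congrArg (· \ A) hTT'
      _ = T' := union_sdiff_cancel_left (hdisj T' hT')
  have hcard : #(univ \ A) = N - #A := by rw [card_sdiff_of_subset (subset_univ A)]; simp
  calc expBp N p (fun B => if A ⊆ B then 1 else 0)
      = ∑ B ∈ univ.filter (A ⊆ ·), p ^ #B * (1 - p) ^ (N - #B) := by
        simp only [expBp, mul_ite, mul_one, mul_zero, sum_filter]
    _ = ∑ T ∈ (univ \ A).powerset, p ^ #A * (p ^ #T * (1 - p) ^ (#(univ \ A) - #T)) := by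
        rw [hsupersets, sum_image hinj]
        refine sum_congr rfl fun T hT => ?_
        rw [card_union_of_disjoint (hdisj T hT), hcard, Nat.sub_add_eq, pow_add]
        ring
    _ = p ^ #A := by rw [← mul_sum, sum_pow_mul_eq_add_pow, add_sub_cancel, one_pow, mul_one]

lemma expBp_ite_subset_pow_le {k : ℕ} {w : Finset (Fin N) → ℝ} (hw : ∀ e, 0 ≤ w e)
    (hk : ∀ e, w e ≠ 0 → #e = k) {p M : ℝ} (hp : 0 ≤ p) (hM : 0 ≤ M) {n : ℕ}
    (hfirst : ∀ A : Finset (Fin N), #A ≤ n → ∑ f, w f * p ^ #(f \ A) ≤ M) (m : ℕ) :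
    ∀ A : Finset (Fin N), #A + m * k ≤ n →
      expBp N p (fun B => if A ⊆ B then edgeCount w B ^ m else 0) ≤ p ^ #A * M ^ m := by
  induction m with
  | zero =>
    intro A _
    simpa only [pow_zero, mul_one] using (expBp_ite_subset_one p A).le
  | succ m ih =>
    intro A hA
    have hexpand : ∀ B, (if A ⊆ B then edgeCount w B ^ (m + 1) else 0) =
        ∑ f, w f * if A ∪ f ⊆ B then edgeCount w B ^ m else 0 := by
      intro B
      by_cases hAB : A ⊆ B
      · have hpowerset : B.powerset = univ.filter (· ⊆ B) := by ext; simp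
        simp only [hAB, union_subset_iff, true_and, if_true, mul_ite, mul_zero, ← sum_filter,
          ← hpowerset, edgeCount, pow_succ, mul_comm _ (∑ e ∈ B.powerset, w e), sum_mul]
      · simp [hAB, union_subset_iff]
    calc expBp N p (fun B => if A ⊆ B then edgeCount w B ^ (m + 1) else 0)
        = ∑ f, w f * expBp N p (fun B => if A ∪ f ⊆ B then edgeCount w B ^ m else 0) := by
          simp only [expBp, hexpand, mul_sum]
          rw [sum_comm]
          simp only [mul_left_comm]
      _ ≤ ∑ f, w f * (p ^ #(A ∪ f) * M ^ m) := by
          refine sum_le_sum fun f _ => ?_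
          rcases eq_or_ne (w f) 0 with h0 | h0
          · simp [h0]
          refine mul_le_mul_of_nonneg_left (ih _ ?_) (hw f)
          have := card_union_le A f
          have := hk f h0
          rw [Nat.succ_mul] at hA
          omega
      _ = p ^ #A * M ^ m * ∑ f, w f * p ^ #(f \ A) := by
          rw [mul_sum]
          refine sum_congr rfl fun f _ => ?_
          rw [union_comm, ← card_sdiff_add_card, pow_add]
          ring
      _ ≤ p ^ #A * M ^ m * M := by
          gcongr
          exact hfirst A (by nlinarith)
      _ = p ^ #A * M ^ (m + 1) := by ring

lemma expBp_edgeCount_pow_le {k : ℕ} {w : Finset (Fin N) → ℝ} (hw : ∀ e, 0 ≤ w e)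
    (hk : ∀ e, w e ≠ 0 → #e = k) {p M : ℝ} (hp : 0 ≤ p) (hM : 0 ≤ M) (ℓ : ℕ)
    (hfirst : ∀ A : Finset (Fin N), #A ≤ ℓ * k → ∑ f, w f * p ^ #(f \ A) ≤ M) :
    expBp N p (fun B => edgeCount w B ^ ℓ) ≤ M ^ ℓ := by
  simpa using expBp_ite_subset_pow_le hw hk hp hM hfirst ℓ ∅ (by simp)

end BinomialModel

theorem statement7
    (k r C : ℕ) (hr1 : 1 ≤ r) (hrk : r ≤ k) (hC : 0 < C) (ε : ℝ) (hε : 0 < ε) :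
    ∃ c : ℝ, 0 < c ∧
      ∀ (N : ℕ) (w : Finset (Fin N) → ℝ),
        (∀ e, 0 ≤ w e) → (∀ e, w e ≠ 0 → e.card = k) →
        (∀ R : Finset (Fin N), R.card = r → degSet w R ≤ C) →
        ∀ t : ℝ, 0 < t → t < 1 →
        ∀ p : ℝ, 0 ≤ p → p ≤ t →
        ∀ ℓ : ℕ, 1 ≤ ℓ → (ℓ : ℝ) ≤ c * t ^ ((k : ℝ) / r) * N →
          expBp N p (fun B => edgeCount w B ^ ℓ) ≤
            max ((p ^ k * totalWeight w) ^ ℓ * (1 + ε / 2) ^ ℓ)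
              ((ε * t ^ k * (N : ℝ) ^ r / 2) ^ ℓ) := by
  have hk0 : (0 : ℝ) < k := by exact_mod_cast hr1.trans hrk
  set c := min (k : ℝ)⁻¹ (ε ^ 2 / (2 * C * r * k * (2 + ε)))
  have hc0 : 0 < c := by positivity
  have hck : c * k ≤ 1 := (mul_le_mul_of_nonneg_right (min_le_left _ _) hk0.le).trans_eq
    (inv_mul_cancel₀ hk0.ne')
  refine ⟨c, hc0, fun N w hw hk hdeg t ht0 ht1 p hp hpt ℓ _ hℓ => ?_⟩
  set μ := p ^ k * totalWeight w
  set D := C * (r * (c * k) * (t ^ k * N ^ r))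
  have hfirst : ∀ A : Finset (Fin N), #A ≤ ℓ * k → ∑ f, w f * p ^ #(f \ A) ≤ μ + D := by
    refine fun A hA => sum_mul_pow_card_sdiff_le_of_card_le hw hk hr1 hrk (Nat.cast_nonneg C) hdeg
      hp hpt ht0 ht1.le (by positivity) hck ?_
    calc (#A : ℝ) ≤ ℓ * k := by exact_mod_cast hA
      _ ≤ c * t ^ ((k : ℝ) / r) * N * k := by gcongr
      _ = c * k * (t ^ ((k : ℝ) / r) * N) := by ring
  have hD : (2 + ε) * D ≤ ε * (ε * t ^ k * N ^ r / 2) := by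
    have hc : c * (2 * C * r * k * (2 + ε)) ≤ ε ^ 2 :=
      (le_div_iff₀ (by positivity)).1 (min_le_right _ _)
    have hX : 0 ≤ t ^ k * (N : ℝ) ^ r := by positivity
    nlinarith [mul_le_mul_of_nonneg_right hc hX]
  have hμD : 0 ≤ μ + D := by
    have : 0 ≤ totalWeight w := sum_nonneg fun e _ => hw e
    positivity
  calc expBp N p (fun B => edgeCount w B ^ ℓ) ≤ (μ + D) ^ ℓ :=
        expBp_edgeCount_pow_le hw hk hp hμD ℓ hfirst
    _ ≤ max ((μ * (1 + ε / 2)) ^ ℓ) ((ε * t ^ k * N ^ r / 2) ^ ℓ) :=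
        pow_le_max_pow_of_le_max hμD (add_le_max_mul_one_add_half hε hD) ℓ
    _ = _ := by rw [mul_pow]

end Paper

end
end

section
/- Let H^S be the 4-uniform hypergraph on [N] whose edges are the sets {x,y,z,w} of four pairwise distinct elements of [N] with x + y = z + w. Then the average degree satisfies d̄(H^S) = (1+o(1))·N²/3 and the degree variance satisfies σ²(H^S) = (1+o(1))·N⁴/720. -/
open Finset Filter MeasureTheory
open scoped Classical

noncomputable section

namespace Paper

variable {N : ℕ}

/-! ### Auxiliary material for `statement17` -/

section Statement17Aux

/-- Power sum: `∑ a < N, a`. -/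
lemma s17_psum1 (N : ℕ) : ∑ a ∈ Finset.range N, (a:ℝ) = (N:ℝ)^2/2 - N/2 := by
  induction N with
  | zero => simp
  | succ n ih => rw [Finset.sum_range_succ, ih]; push_cast; ring

lemma s17_psum2 (N : ℕ) : ∑ a ∈ Finset.range N, (a:ℝ)^2
    = (N:ℝ)^3/3 - (N:ℝ)^2/2 + (N:ℝ)/6 := by
  induction N with
  | zero => simp
  | succ n ih => rw [Finset.sum_range_succ, ih]; push_cast; ring

lemma s17_psum3 (N : ℕ) : ∑ a ∈ Finset.range N, (a:ℝ)^3
    = (N:ℝ)^4/4 - (N:ℝ)^3/2 + (N:ℝ)^2/4 := by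
  induction N with
  | zero => simp
  | succ n ih => rw [Finset.sum_range_succ, ih]; push_cast; ring

lemma s17_psum4 (N : ℕ) : ∑ a ∈ Finset.range N, (a:ℝ)^4
    = (N:ℝ)^5/5 - (N:ℝ)^4/2 + (N:ℝ)^3/3 - (N:ℝ)/30 := by
  induction N with
  | zero => simp
  | succ n ih => rw [Finset.sum_range_succ, ih]; push_cast; ring

lemma s17_sum_poly4 (c0 c1 c2 c3 c4 : ℝ) (N : ℕ) :
    ∑ a ∈ Finset.range N, (c0 + c1*(a:ℝ) + c2*(a:ℝ)^2 + c3*(a:ℝ)^3 + c4*(a:ℝ)^4)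
      = c0*N + c1*((N:ℝ)^2/2 - N/2) + c2*((N:ℝ)^3/3 - (N:ℝ)^2/2 + (N:ℝ)/6)
        + c3*((N:ℝ)^4/4 - (N:ℝ)^3/2 + (N:ℝ)^2/4)
        + c4*((N:ℝ)^5/5 - (N:ℝ)^4/2 + (N:ℝ)^3/3 - (N:ℝ)/30) := by
  rw [Finset.sum_add_distrib, Finset.sum_add_distrib, Finset.sum_add_distrib,
    Finset.sum_add_distrib, ← Finset.mul_sum, ← Finset.mul_sum, ← Finset.mul_sum,
    ← Finset.mul_sum, s17_psum1, s17_psum2, s17_psum3, s17_psum4,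
    Finset.sum_const, Finset.card_range, nsmul_eq_mul, mul_comm (N:ℝ) c0]

lemma s17_tendsto_const_div (C : ℝ) :
    Filter.Tendsto (fun n : ℕ => C / n) Filter.atTop (nhds 0) := by
  simpa using (tendsto_natCast_atTop_atTop (R := ℝ)).inv_tendsto_atTop.const_mul C |>.congr
    (by intro n; simp [div_eq_mul_inv])

/-- Solutions of `z + w = s` in `Fin N × Fin N`. -/
def s17Sol (N s : ℕ) : Finset (Fin N × Fin N) :=
  Finset.univ.filter (fun q : Fin N × Fin N => (q.1:ℕ) + (q.2:ℕ) = s)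

def s17U (N : ℕ) (a : Fin N) : Finset (Fin N × Fin N × Fin N) :=
  Finset.univ.filter (fun p : Fin N × Fin N × Fin N =>
    (a:ℕ) + (p.1:ℕ) = (p.2.1:ℕ) + (p.2.2:ℕ))

def s17T (N : ℕ) (a : Fin N) : Finset (Fin N × Fin N × Fin N) :=
  Finset.univ.filter (fun p : Fin N × Fin N × Fin N =>
    p.1 ≠ a ∧ p.2.1 ≠ a ∧ p.2.2 ≠ a ∧ p.2.1 ≠ p.1 ∧ p.2.2 ≠ p.1 ∧ p.2.1 ≠ p.2.2 ∧
      (a:ℕ) + (p.1:ℕ) = (p.2.1:ℕ) + (p.2.2:ℕ))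

noncomputable def s17E (N : ℕ) (a : Fin N) : Finset (Finset (Fin N)) :=
  Finset.univ.filter (fun e => a ∈ e ∧ Paper.isSidon e)

lemma s17_trip_ext {N : ℕ} {p q : Fin N × Fin N × Fin N} (h1 : (p.1:ℕ) = (q.1:ℕ))
    (h2 : (p.2.1:ℕ) = (q.2.1:ℕ)) (h3 : (p.2.2:ℕ) = (q.2.2:ℕ)) : p = q :=
  Prod.ext (Fin.ext h1) (Prod.ext (Fin.ext h2) (Fin.ext h3))

end Statement17Aux

lemma s17_Sol_card (hN : 0 < N) (s : ℕ) :
    (s17Sol N s).card = min s (N-1) + 1 - (s - (N-1)) := by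
  rw [show min s (N-1) + 1 - (s - (N-1)) = (Finset.Icc (s - (N-1)) (min s (N-1))).card by
    rw [Nat.card_Icc]]
  apply Finset.card_bij (fun q _ => (q.1 : ℕ))
  · rintro ⟨z, w⟩ hq
    simp only [s17Sol, mem_filter, mem_univ, true_and] at hq
    have h1 := z.isLt; have h2 := w.isLt
    simp only [Finset.mem_Icc]
    omega
  · rintro ⟨z, w⟩ hq ⟨z', w'⟩ hq' h
    simp only [s17Sol, mem_filter, mem_univ, true_and] at hq hq'
    have hz : (z:ℕ) = (z':ℕ) := h
    have hw : (w:ℕ) = (w':ℕ) := by omega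
    simp only [Prod.mk.injEq]
    exact ⟨Fin.ext hz, Fin.ext hw⟩
  · intro j hj
    simp only [Finset.mem_Icc] at hj
    refine ⟨(⟨j, by omega⟩, ⟨s - j, by omega⟩), ?_, rfl⟩
    simp only [s17Sol, mem_filter, mem_univ, true_and]
    omega

lemma s17_Sol_card_int (hN : 0 < N) (s : ℕ) (hs : s ≤ 2*N - 2) :
    ((s17Sol N s).card : ℤ) = N - |(s:ℤ) - ((N:ℤ) - 1)| := by
  rw [s17_Sol_card hN s]
  rcases le_or_gt s (N-1) with h | h
  · rw [abs_of_nonpos (by push_cast; omega)]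
    push_cast; omega
  · rw [abs_of_nonneg (by push_cast; omega)]
    push_cast; omega

lemma s17_gaussZ (n : ℕ) : 2 * ∑ y ∈ range n, (y:ℤ) = n^2 - n := by
  induction n with
  | zero => simp
  | succ m ih => rw [Finset.sum_range_succ]; push_cast; push_cast at ih; linarith

lemma s17_sumAbs (a : ℕ) (ha : a < N) :
    2 * ∑ y ∈ range N, |(a:ℤ) + y - ((N:ℤ) - 1)| =
      ((a:ℤ)^2 + a) + ((N:ℤ) - 1 - a) * ((N:ℤ) - a) := by
  set m : ℕ := N - 1 - a with hm
  have hcg : ∀ y ∈ range N, |(a:ℤ) + y - ((N:ℤ) - 1)| = |(y:ℤ) - m| := by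
    intro y _; congr 1; push_cast; omega
  rw [Finset.sum_congr rfl hcg]
  rw [Finset.range_eq_Ico, ← Finset.sum_Ico_consecutive _ (Nat.zero_le (m+1)) (by omega)]
  have h1 : ∑ y ∈ Finset.Ico 0 (m+1), |(y:ℤ) - m| = ∑ y ∈ range (m+1), ((m:ℤ) - y) := by
    rw [← Finset.range_eq_Ico]
    refine Finset.sum_congr rfl fun y hy => ?_
    rw [mem_range] at hy
    rw [abs_of_nonpos (by push_cast; omega)]; ring
  have h2 : ∑ y ∈ Finset.Ico (m+1) N, |(y:ℤ) - m| = ∑ i ∈ range (N - (m+1)), ((i:ℤ) + 1) := by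
    rw [Finset.sum_Ico_eq_sum_range]
    refine Finset.sum_congr rfl fun i hi => ?_
    rw [abs_of_nonneg (by push_cast; omega)]; push_cast; ring
  rw [h1, h2]
  have g1 := s17_gaussZ (m+1)
  have g2 := s17_gaussZ (N - (m+1))
  rw [Finset.sum_sub_distrib, Finset.sum_add_distrib]
  simp only [Finset.sum_const, Finset.card_range, nsmul_eq_mul]
  have hma : (m:ℤ) = (N:ℤ) - 1 - a := by push_cast; omega
  have hk : ((N - (m+1) : ℕ) : ℤ) = a := by push_cast; omega
  push_cast at g1 g2 ⊢
  nlinarith [g1, g2, hma, hk]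

lemma s17_U_card (N : ℕ) (a : Fin N) :
    (s17U N a).card = ∑ y : Fin N, (s17Sol N ((a:ℕ) + (y:ℕ))).card := by
  rw [Finset.card_eq_sum_card_fiberwise (f := fun p => p.1) (t := univ) (fun _ _ => mem_univ _)]
  refine Finset.sum_congr rfl fun y _ => ?_
  apply Finset.card_bij (fun p _ => p.2)
  · rintro ⟨y', z, w⟩ hp
    simp only [s17U, mem_filter, mem_univ, true_and] at hp
    obtain ⟨h1, h2⟩ := hp
    subst h2
    simpa [s17Sol] using h1.symm
  · rintro ⟨y1, z1, w1⟩ hp ⟨y2, z2, w2⟩ hq h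
    simp only [s17U, mem_filter, mem_univ, true_and] at hp hq
    simp only [Prod.mk.injEq]
    exact ⟨hp.2.trans hq.2.symm, congrArg Prod.fst h, congrArg Prod.snd h⟩
  · rintro ⟨z, w⟩ hq
    simp only [s17Sol, mem_filter, mem_univ, true_and] at hq
    exact ⟨(y, z, w), by simp [s17U, hq.symm], rfl⟩

lemma s17_card_le_of_inj {N : ℕ} (s : Finset (Fin N × Fin N × Fin N))
    (f : Fin N × Fin N × Fin N → Fin N)
    (hinj : ∀ p ∈ s, ∀ q ∈ s, f p = f q → p = q) :
    s.card ≤ N := by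
  calc s.card ≤ (univ : Finset (Fin N)).card :=
        Finset.card_le_card_of_injOn f (fun _ _ => mem_univ _) hinj
    _ = N := by simp

lemma s17_T_le (N : ℕ) (a : Fin N) : (s17T N a).card ≤ (s17U N a).card := by
  apply Finset.card_le_card
  intro p hp
  simp only [s17T, s17U, mem_filter, mem_univ, true_and] at hp ⊢
  exact hp.2.2.2.2.2.2

lemma s17_U_le (N : ℕ) (a : Fin N) : (s17U N a).card ≤ (s17T N a).card + 6 * N := by
  classical
  set B1 := (s17U N a).filter (fun p => p.1 = a) with hB1
  set B2 := (s17U N a).filter (fun p => p.2.1 = a) with hB2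
  set B3 := (s17U N a).filter (fun p => p.2.2 = a) with hB3
  set B4 := (s17U N a).filter (fun p => p.2.1 = p.1) with hB4
  set B5 := (s17U N a).filter (fun p => p.2.2 = p.1) with hB5
  set B6 := (s17U N a).filter (fun p => p.2.1 = p.2.2) with hB6
  have key : s17U N a ⊆ s17T N a ∪ B1 ∪ B2 ∪ B3 ∪ B4 ∪ B5 ∪ B6 := by
    intro p hp
    simp only [hB1, hB2, hB3, hB4, hB5, hB6, Finset.mem_union, mem_filter]
    by_cases h1 : p.1 = a; · tauto
    by_cases h2 : p.2.1 = a; · tauto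
    by_cases h3 : p.2.2 = a; · tauto
    by_cases h4 : p.2.1 = p.1; · tauto
    by_cases h5 : p.2.2 = p.1; · tauto
    by_cases h6 : p.2.1 = p.2.2; · tauto
    left; left; left; left; left; left
    simp only [s17T, s17U, mem_filter, mem_univ, true_and] at hp ⊢
    tauto
  have b1 : B1.card ≤ N := by
    apply s17_card_le_of_inj _ (fun p => p.2.1)
    rintro ⟨y1,z1,w1⟩ hp ⟨y2,z2,w2⟩ hq h
    simp only [hB1, s17U, mem_filter, mem_univ, true_and] at hp hq
    have e1 : (y1:ℕ) = (a:ℕ) := congrArg Fin.val hp.2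
    have e2 : (y2:ℕ) = (a:ℕ) := congrArg Fin.val hq.2
    have e3 : (z1:ℕ) = (z2:ℕ) := congrArg Fin.val h
    have s1 := hp.1; have s2 := hq.1
    exact s17_trip_ext (show ((y1:ℕ)) = (y2:ℕ) by omega) (show ((z1:ℕ)) = (z2:ℕ) by omega)
      (show ((w1:ℕ)) = (w2:ℕ) by omega)
  have b2 : B2.card ≤ N := by
    apply s17_card_le_of_inj _ (fun p => p.1)
    rintro ⟨y1,z1,w1⟩ hp ⟨y2,z2,w2⟩ hq h
    simp only [hB2, s17U, mem_filter, mem_univ, true_and] at hp hq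
    have e1 : (z1:ℕ) = (a:ℕ) := congrArg Fin.val hp.2
    have e2 : (z2:ℕ) = (a:ℕ) := congrArg Fin.val hq.2
    have e3 : (y1:ℕ) = (y2:ℕ) := congrArg Fin.val h
    have s1 := hp.1; have s2 := hq.1
    exact s17_trip_ext (show ((y1:ℕ)) = (y2:ℕ) by omega) (show ((z1:ℕ)) = (z2:ℕ) by omega)
      (show ((w1:ℕ)) = (w2:ℕ) by omega)
  have b3 : B3.card ≤ N := by
    apply s17_card_le_of_inj _ (fun p => p.1)
    rintro ⟨y1,z1,w1⟩ hp ⟨y2,z2,w2⟩ hq h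
    simp only [hB3, s17U, mem_filter, mem_univ, true_and] at hp hq
    have e1 : (w1:ℕ) = (a:ℕ) := congrArg Fin.val hp.2
    have e2 : (w2:ℕ) = (a:ℕ) := congrArg Fin.val hq.2
    have e3 : (y1:ℕ) = (y2:ℕ) := congrArg Fin.val h
    have s1 := hp.1; have s2 := hq.1
    exact s17_trip_ext (show ((y1:ℕ)) = (y2:ℕ) by omega) (show ((z1:ℕ)) = (z2:ℕ) by omega)
      (show ((w1:ℕ)) = (w2:ℕ) by omega)
  have b4 : B4.card ≤ N := by
    apply s17_card_le_of_inj _ (fun p => p.1)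
    rintro ⟨y1,z1,w1⟩ hp ⟨y2,z2,w2⟩ hq h
    simp only [hB4, s17U, mem_filter, mem_univ, true_and] at hp hq
    have e1 : (z1:ℕ) = (y1:ℕ) := congrArg Fin.val hp.2
    have e2 : (z2:ℕ) = (y2:ℕ) := congrArg Fin.val hq.2
    have e3 : (y1:ℕ) = (y2:ℕ) := congrArg Fin.val h
    have s1 := hp.1; have s2 := hq.1
    exact s17_trip_ext (show ((y1:ℕ)) = (y2:ℕ) by omega) (show ((z1:ℕ)) = (z2:ℕ) by omega)
      (show ((w1:ℕ)) = (w2:ℕ) by omega)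
  have b5 : B5.card ≤ N := by
    apply s17_card_le_of_inj _ (fun p => p.1)
    rintro ⟨y1,z1,w1⟩ hp ⟨y2,z2,w2⟩ hq h
    simp only [hB5, s17U, mem_filter, mem_univ, true_and] at hp hq
    have e1 : (w1:ℕ) = (y1:ℕ) := congrArg Fin.val hp.2
    have e2 : (w2:ℕ) = (y2:ℕ) := congrArg Fin.val hq.2
    have e3 : (y1:ℕ) = (y2:ℕ) := congrArg Fin.val h
    have s1 := hp.1; have s2 := hq.1
    exact s17_trip_ext (show ((y1:ℕ)) = (y2:ℕ) by omega) (show ((z1:ℕ)) = (z2:ℕ) by omega)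
      (show ((w1:ℕ)) = (w2:ℕ) by omega)
  have b6 : B6.card ≤ N := by
    apply s17_card_le_of_inj _ (fun p => p.1)
    rintro ⟨y1,z1,w1⟩ hp ⟨y2,z2,w2⟩ hq h
    simp only [hB6, s17U, mem_filter, mem_univ, true_and] at hp hq
    have e1 : (z1:ℕ) = (w1:ℕ) := congrArg Fin.val hp.2
    have e2 : (z2:ℕ) = (w2:ℕ) := congrArg Fin.val hq.2
    have e3 : (y1:ℕ) = (y2:ℕ) := congrArg Fin.val h
    have s1 := hp.1; have s2 := hq.1
    exact s17_trip_ext (show ((y1:ℕ)) = (y2:ℕ) by omega) (show ((z1:ℕ)) = (z2:ℕ) by omega)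
      (show ((w1:ℕ)) = (w2:ℕ) by omega)
  calc (s17U N a).card ≤ (s17T N a ∪ B1 ∪ B2 ∪ B3 ∪ B4 ∪ B5 ∪ B6).card :=
        Finset.card_le_card key
    _ ≤ (s17T N a).card + B1.card + B2.card + B3.card + B4.card + B5.card + B6.card := by
        refine le_trans (Finset.card_union_le _ _) ?_
        gcongr
        refine le_trans (Finset.card_union_le _ _) ?_
        gcongr
        refine le_trans (Finset.card_union_le _ _) ?_
        gcongr
        refine le_trans (Finset.card_union_le _ _) ?_
        gcongr
        refine le_trans (Finset.card_union_le _ _) ?_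
        gcongr
        exact Finset.card_union_le _ _
    _ ≤ (s17T N a).card + 6 * N := by omega

lemma s17_card3 {α : Type*} [DecidableEq α] (u v t : α) : ({u, v, t} : Finset α).card ≤ 3 :=
  calc ({u, v, t} : Finset α).card ≤ ({v, t} : Finset α).card + 1 := Finset.card_insert_le _ _
    _ ≤ (({t} : Finset α).card + 1) + 1 := by gcongr; exact Finset.card_insert_le _ _
    _ ≤ 3 := by simp

lemma s17_distinct_of_card4 {α : Type*} [DecidableEq α] {x y z w : α}
    (h : ({x, y, z, w} : Finset α).card = 4) :
    x ≠ y ∧ x ≠ z ∧ x ≠ w ∧ y ≠ z ∧ y ≠ w ∧ z ≠ w := by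
  refine ⟨?_, ?_, ?_, ?_, ?_, ?_⟩ <;> rintro rfl
  · have hs : ({x, x, z, w} : Finset α) ⊆ {x, z, w} := by
      intro t ht; simp at ht ⊢; tauto
    have := (Finset.card_le_card hs).trans (s17_card3 x z w); omega
  · have hs : ({x, y, x, w} : Finset α) ⊆ {x, y, w} := by
      intro t ht; simp at ht ⊢; tauto
    have := (Finset.card_le_card hs).trans (s17_card3 x y w); omega
  · have hs : ({x, y, z, x} : Finset α) ⊆ {x, y, z} := by
      intro t ht; simp at ht ⊢; tauto
    have := (Finset.card_le_card hs).trans (s17_card3 x y z); omega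
  · have hs : ({x, y, y, w} : Finset α) ⊆ {x, y, w} := by
      intro t ht; simp at ht ⊢; tauto
    have := (Finset.card_le_card hs).trans (s17_card3 x y w); omega
  · have hs : ({x, y, z, y} : Finset α) ⊆ {x, y, z} := by
      intro t ht; simp at ht ⊢; tauto
    have := (Finset.card_le_card hs).trans (s17_card3 x y z); omega
  · have hs : ({x, y, z, z} : Finset α) ⊆ {x, y, z} := by
      intro t ht; simp at ht ⊢; tauto
    have := (Finset.card_le_card hs).trans (s17_card3 x y z); omega

lemma s17_fiber_card {N : ℕ} (a y₀ z₀ w₀ : Fin N)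
    (d1 : a ≠ y₀) (d2 : a ≠ z₀) (d3 : a ≠ w₀) (d4 : y₀ ≠ z₀) (d5 : y₀ ≠ w₀) (d6 : z₀ ≠ w₀)
    (hsum : (a:ℕ) + (y₀:ℕ) = (z₀:ℕ) + (w₀:ℕ)) :
    ((s17T N a).filter
      (fun p => (insert a {p.1, p.2.1, p.2.2} : Finset (Fin N)) = insert a {y₀, z₀, w₀})).card
      = 2 := by
  have hset : (s17T N a).filter
      (fun p => (insert a {p.1, p.2.1, p.2.2} : Finset (Fin N)) = insert a {y₀, z₀, w₀})
      = {(y₀, z₀, w₀), (y₀, w₀, z₀)} := by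
    ext ⟨y, z, w⟩
    simp only [Finset.mem_filter, s17T, Finset.mem_univ, true_and, Finset.mem_insert,
      Finset.mem_singleton, Prod.mk.injEq]
    constructor
    · rintro ⟨⟨hy, hz, hw, hzy, hwy, hzw, hsum'⟩, hins⟩
      -- underlying triple sets are equal
      have hset3 : ({y, z, w} : Finset (Fin N)) = {y₀, z₀, w₀} := by
        have h1 : a ∉ ({y, z, w} : Finset (Fin N)) := by
          simp [Ne.symm hy, Ne.symm hz, Ne.symm hw]
        have h2 : a ∉ ({y₀, z₀, w₀} : Finset (Fin N)) := by
          simp [d1, d2, d3]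
        rw [← Finset.erase_insert h1, hins, Finset.erase_insert h2]
      have hmy : y ∈ ({y₀, z₀, w₀} : Finset (Fin N)) := by rw [← hset3]; simp
      have hmz : z ∈ ({y₀, z₀, w₀} : Finset (Fin N)) := by rw [← hset3]; simp
      have hmw : w ∈ ({y₀, z₀, w₀} : Finset (Fin N)) := by rw [← hset3]; simp
      have hmy0 : y₀ ∈ ({y, z, w} : Finset (Fin N)) := by rw [hset3]; simp
      simp only [Finset.mem_insert, Finset.mem_singleton] at hmy hmz hmw hmy0
      rcases hmy with rfl | rfl | rfl
      · -- y = y₀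
        have hzz : z = z₀ ∨ z = w₀ := by
          rcases hmz with h | h | h
          · exact absurd h hzy
          · exact Or.inl h
          · exact Or.inr h
        rcases hzz with rfl | rfl
        · exact Or.inl ⟨rfl, rfl, Fin.ext (by omega)⟩
        · exact Or.inr ⟨rfl, rfl, Fin.ext (by omega)⟩
      · -- y = z₀ : contradiction
        exfalso
        have hzz : z = y₀ ∨ z = w₀ := by
          rcases hmz with h | h | h
          · exact Or.inl h
          · exact absurd h hzy
          · exact Or.inr h
        have hww : w = y₀ ∨ w = w₀ := by
          rcases hmw with h | h | h
          · exact Or.inl h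
          · exact absurd h hwy
          · exact Or.inr h
        have hzwsum : (z:ℕ) + (w:ℕ) = (y₀:ℕ) + (w₀:ℕ) := by
          rcases hzz with rfl | rfl <;> rcases hww with rfl | rfl
          · exact absurd rfl hzw
          · rfl
          · omega
          · exact absurd rfl hzw
        exact d3 (Fin.ext (by omega))
      · -- y = w₀ : contradiction
        exfalso
        have hzz : z = y₀ ∨ z = z₀ := by
          rcases hmz with h | h | h
          · exact Or.inl h
          · exact Or.inr h
          · exact absurd h hzy
        have hww : w = y₀ ∨ w = z₀ := by
          rcases hmw with h | h | h
          · exact Or.inl h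
          · exact Or.inr h
          · exact absurd h hwy
        have hzwsum : (z:ℕ) + (w:ℕ) = (y₀:ℕ) + (z₀:ℕ) := by
          rcases hzz with rfl | rfl <;> rcases hww with rfl | rfl
          · exact absurd rfl hzw
          · rfl
          · omega
          · exact absurd rfl hzw
        exact d2 (Fin.ext (by omega))
    · rintro (⟨rfl, rfl, rfl⟩ | ⟨rfl, rfl, rfl⟩)
      · exact ⟨⟨Ne.symm d1, Ne.symm d2, Ne.symm d3, Ne.symm d4, Ne.symm d5, d6, hsum⟩, rfl⟩
      · refine ⟨⟨Ne.symm d1, Ne.symm d3, Ne.symm d2, Ne.symm d5, Ne.symm d4,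
          Ne.symm d6, by omega⟩, ?_⟩
        ext t; simp; tauto
  rw [hset]
  rw [Finset.card_insert_of_notMem (by simp [Prod.ext_iff, d6]), Finset.card_singleton]

lemma s17_card4 {α : Type*} [DecidableEq α] {x y z w : α} (h1 : x ≠ y) (h2 : x ≠ z) (h3 : x ≠ w)
    (h4 : y ≠ z) (h5 : y ≠ w) (h6 : z ≠ w) : ({x, y, z, w} : Finset α).card = 4 := by
  rw [Finset.card_insert_of_notMem (by simp [h1, h2, h3]),
    Finset.card_insert_of_notMem (by simp [h4, h5]),
    Finset.card_insert_of_notMem (by simp [h6]), Finset.card_singleton]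

lemma s17_T_card_eq (N : ℕ) (a : Fin N) : (s17T N a).card = 2 * (s17E N a).card := by
  have hmap : ∀ p ∈ s17T N a,
      (insert a {p.1, p.2.1, p.2.2} : Finset (Fin N)) ∈ s17E N a := by
    rintro ⟨y, z, w⟩ hp
    simp only [s17T, mem_filter, mem_univ, true_and] at hp
    obtain ⟨hy, hz, hw, hzy, hwy, hzw, hsum⟩ := hp
    simp only [s17E, mem_filter, mem_univ, true_and]
    refine ⟨Finset.mem_insert_self _ _, a, y, z, w, rfl, ?_, hsum⟩
    exact s17_card4 (Ne.symm hy) (Ne.symm hz) (Ne.symm hw) (Ne.symm hzy) (Ne.symm hwy) hzw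
  rw [Finset.card_eq_sum_card_fiberwise hmap]
  have fib : ∀ e ∈ s17E N a,
      ((s17T N a).filter
        (fun p => (insert a {p.1, p.2.1, p.2.2} : Finset (Fin N)) = e)).card = 2 := by
    intro e he
    simp only [s17E, mem_filter, mem_univ, true_and] at he
    obtain ⟨ha, x, y, z, w, he', hc, hs⟩ := he
    subst he'
    obtain ⟨d1, d2, d3, d4, d5, d6⟩ := s17_distinct_of_card4 hc
    simp only [Finset.mem_insert, Finset.mem_singleton] at ha
    rcases ha with rfl | rfl | rfl | rfl
    · exact s17_fiber_card a y z w d1 d2 d3 d4 d5 d6 hs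
    · have hrw : ({x, a, z, w} : Finset (Fin N)) = insert a {x, z, w} := by
        ext t; simp; tauto
      rw [hrw]
      exact s17_fiber_card a x z w (Ne.symm d1) d4 d5 d2 d3 d6 (by omega)
    · have hrw : ({x, y, a, w} : Finset (Fin N)) = insert a {w, x, y} := by
        ext t; simp; tauto
      rw [hrw]
      exact s17_fiber_card a w x y d6 (Ne.symm d2) (Ne.symm d4) (Ne.symm d3) (Ne.symm d5)
        d1 (by omega)
    · have hrw : ({x, y, z, a} : Finset (Fin N)) = insert a {z, x, y} := by
        ext t; simp; tauto
      rw [hrw]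
      exact s17_fiber_card a z x y (Ne.symm d6) (Ne.symm d3) (Ne.symm d5) (Ne.symm d2)
        (Ne.symm d4) d1 (by omega)
  rw [Finset.sum_congr rfl fib, Finset.sum_const, smul_eq_mul, mul_comm]

noncomputable def s17q (N : ℕ) (a : ℕ) : ℝ :=
  ((N:ℝ)^2+N)/4 - (a:ℝ)^2/2 + ((N:ℝ)-1)*(a:ℝ)/2

noncomputable def s17Q (N : ℕ) : ℝ := (N:ℝ)^3/3 + (N:ℝ)/6

lemma s17_vdeg_eq (N : ℕ) (a : Fin N) :
    vdeg (sidonW N) a = ((s17E N a).card : ℝ) := by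
  unfold vdeg sidonW
  rw [Finset.sum_boole, Finset.filter_filter]
  norm_num [s17E]

lemma s17_U_card_int (N : ℕ) (a : Fin N) :
    2 * ((s17U N a).card : ℤ) =
      2*(N:ℤ)^2 - (((a:ℕ):ℤ)^2 + ((a:ℕ):ℤ)) - ((N:ℤ)-1-((a:ℕ):ℤ))*((N:ℤ)-((a:ℕ):ℤ)) := by
  have hN : 0 < N := a.pos
  have h1 : ((s17U N a).card : ℤ) =
      ∑ y ∈ range N, ((N:ℤ) - |((a:ℕ):ℤ) + (y:ℤ) - ((N:ℤ)-1)|) := by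
    rw [s17_U_card]
    push_cast
    rw [← Fin.sum_univ_eq_sum_range (fun y => ((N:ℤ) - |((a:ℕ):ℤ) + (y:ℤ) - ((N:ℤ)-1)|)) N]
    refine Finset.sum_congr rfl fun y _ => ?_
    have hy := y.isLt; have ha := a.isLt
    have h := s17_Sol_card_int hN ((a:ℕ)+(y:ℕ)) (by omega)
    push_cast at h
    exact h
  rw [h1, Finset.sum_sub_distrib, Finset.sum_const, Finset.card_range, nsmul_eq_mul]
  have h2 := s17_sumAbs (N := N) (a:ℕ) a.isLt
  linarith

lemma s17_vdeg_close (N : ℕ) (a : Fin N) :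
    |vdeg (sidonW N) a - s17q N (a:ℕ)| ≤ 3*(N:ℝ) := by
  have hT : ((s17T N a).card:ℝ) = 2 * vdeg (sidonW N) a := by
    rw [s17_vdeg_eq, s17_T_card_eq]; push_cast; ring
  have hU : ((s17U N a).card:ℝ) = 2 * s17q N (a:ℕ) := by
    have h := s17_U_card_int N a
    have hr := congrArg (fun z : ℤ => (z:ℝ)) h
    simp only [Int.cast_mul, Int.cast_ofNat, Int.cast_sub, Int.cast_add, Int.cast_pow,
      Int.cast_natCast, Int.cast_one, Int.cast_two] at hr
    push_cast at hr
    unfold s17q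
    linarith
  have h1 : ((s17T N a).card:ℝ) ≤ ((s17U N a).card:ℝ) := by
    exact_mod_cast s17_T_le N a
  have h2 : ((s17U N a).card:ℝ) ≤ ((s17T N a).card:ℝ) + 6*(N:ℝ) := by
    exact_mod_cast s17_U_le N a
  rw [abs_le]; constructor <;> linarith

lemma s17_sum_q (N : ℕ) : ∑ a ∈ Finset.range N, s17q N a = s17Q N := by
  have h := s17_sum_poly4 (((N:ℝ)^2+(N:ℝ))/4) (((N:ℝ)-1)/2) (-(1:ℝ)/2) 0 0 N
  calc ∑ a ∈ Finset.range N, s17q N a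
      = ∑ a ∈ Finset.range N, ((((N:ℝ)^2+(N:ℝ))/4) + (((N:ℝ)-1)/2)*(a:ℝ)
          + (-(1:ℝ)/2)*(a:ℝ)^2 + 0*(a:ℝ)^3 + 0*(a:ℝ)^4) :=
        Finset.sum_congr rfl (fun a _ => by unfold s17q; ring)
    _ = s17Q N := by rw [h]; unfold s17Q; ring

lemma s17_var_q (N : ℕ) :
    ∑ a ∈ Finset.range N, ((N:ℝ) * s17q N a - s17Q N)^2
      = (N:ℝ)^7/720 - (N:ℝ)^5/144 + (N:ℝ)^3/180 := by
  have h := s17_sum_poly4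
    ((1/36)*(N:ℝ)^2 - (1/12)*(N:ℝ)^3 + (13/144)*(N:ℝ)^4 - (1/24)*(N:ℝ)^5 + (1/144)*(N:ℝ)^6)
    ((1/6)*(N:ℝ)^2 - (5/12)*(N:ℝ)^3 + (1/3)*(N:ℝ)^4 - (1/12)*(N:ℝ)^5)
    ((5/12)*(N:ℝ)^2 - (3/4)*(N:ℝ)^3 + (1/3)*(N:ℝ)^4)
    ((1/2)*(N:ℝ)^2 - (1/2)*(N:ℝ)^3)
    ((1/4)*(N:ℝ)^2) N
  calc ∑ a ∈ Finset.range N, ((N:ℝ) * s17q N a - s17Q N)^2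
      = ∑ a ∈ Finset.range N,
          (((1/36)*(N:ℝ)^2 - (1/12)*(N:ℝ)^3 + (13/144)*(N:ℝ)^4 - (1/24)*(N:ℝ)^5
              + (1/144)*(N:ℝ)^6)
            + ((1/6)*(N:ℝ)^2 - (5/12)*(N:ℝ)^3 + (1/3)*(N:ℝ)^4 - (1/12)*(N:ℝ)^5)*(a:ℝ)
            + ((5/12)*(N:ℝ)^2 - (3/4)*(N:ℝ)^3 + (1/3)*(N:ℝ)^4)*(a:ℝ)^2
            + ((1/2)*(N:ℝ)^2 - (1/2)*(N:ℝ)^3)*(a:ℝ)^3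
            + ((1/4)*(N:ℝ)^2)*(a:ℝ)^4) :=
        Finset.sum_congr rfl (fun a _ => by unfold s17q s17Q; ring)
    _ = (N:ℝ)^7/720 - (N:ℝ)^5/144 + (N:ℝ)^3/180 := by rw [h]; ring

lemma s17_sum_close (N : ℕ) :
    |∑ a : Fin N, vdeg (sidonW N) a - s17Q N| ≤ 3*(N:ℝ)*(N:ℝ) := by
  have hq : ∑ a : Fin N, s17q N (a:ℕ) = s17Q N := by
    rw [Fin.sum_univ_eq_sum_range (fun a => s17q N a) N, s17_sum_q]
  rw [← hq, ← Finset.sum_sub_distrib]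
  calc |∑ a : Fin N, (vdeg (sidonW N) a - s17q N (a:ℕ))|
      ≤ ∑ a : Fin N, |vdeg (sidonW N) a - s17q N (a:ℕ)| := Finset.abs_sum_le_sum_abs _ _
    _ ≤ ∑ _a : Fin N, 3*(N:ℝ) := Finset.sum_le_sum (fun a _ => s17_vdeg_close N a)
    _ = 3*(N:ℝ)*(N:ℝ) := by
          rw [Finset.sum_const, Finset.card_univ, Fintype.card_fin, nsmul_eq_mul]
          ring

lemma s17_avg_close (N : ℕ) (hN : 1 ≤ N) :
    |avgDeg (sidonW N) - (N:ℝ)^2/3| ≤ 4*(N:ℝ) := by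
  have hN0 : (0:ℝ) < N := by exact_mod_cast hN
  have hN1 : (1:ℝ) ≤ N := by exact_mod_cast hN
  have hsum := s17_sum_close N
  have e1 : avgDeg (sidonW N) - (N:ℝ)^2/3
      = (∑ a : Fin N, vdeg (sidonW N) a - s17Q N)/N + 1/6 := by
    unfold avgDeg s17Q; field_simp; ring
  rw [e1]
  have h2 : |(∑ a : Fin N, vdeg (sidonW N) a - s17Q N)/N| ≤ 3*(N:ℝ) := by
    rw [abs_div, abs_of_pos hN0, div_le_iff₀ hN0]
    nlinarith
  calc |(∑ a : Fin N, vdeg (sidonW N) a - s17Q N)/N + 1/6|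
      ≤ |(∑ a : Fin N, vdeg (sidonW N) a - s17Q N)/N| + |(1:ℝ)/6| := abs_add_le _ _
    _ ≤ 3*(N:ℝ) + 1/6 := by rw [abs_of_pos (by norm_num : (0:ℝ) < 1/6)]; linarith
    _ ≤ 4*(N:ℝ) := by linarith

set_option maxHeartbeats 1000000 in
lemma s17_var_close (N : ℕ) (hN : 1 ≤ N) :
    |degVar (sidonW N) - (N:ℝ)^4/720| ≤ 73*(N:ℝ)^3 := by
  have hN0 : (0:ℝ) < N := by exact_mod_cast hN
  have hN1 : (1:ℝ) ≤ N := by exact_mod_cast hN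
  set c : ℝ := s17Q N / N with hc
  set D := avgDeg (sidonW N) with hD
  have hsum := s17_sum_close N
  have hDc : |D - c| ≤ 3*(N:ℝ) := by
    have e : D - c = (∑ a : Fin N, vdeg (sidonW N) a - s17Q N)/N := by
      rw [hD, hc]; unfold avgDeg; field_simp
    rw [e, abs_div, abs_of_pos hN0, div_le_iff₀ hN0]
    nlinarith
  have hcval : c = (N:ℝ)^2/3 + 1/6 := by
    rw [hc]; unfold s17Q; field_simp
  have hqc : ∀ a : Fin N, |s17q N (a:ℕ) - c| ≤ 2*(N:ℝ)^2 := by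
    intro a
    have ha : ((a:ℕ):ℝ) ≤ (N:ℝ) := by exact_mod_cast a.isLt.le
    have ha0 : (0:ℝ) ≤ ((a:ℕ):ℝ) := Nat.cast_nonneg _
    rw [hcval]; unfold s17q; rw [abs_le]
    constructor <;> nlinarith
  have hterm : ∀ a : Fin N,
      |(vdeg (sidonW N) a - D)^2 - (s17q N (a:ℕ) - c)^2| ≤ 60*(N:ℝ)^3 := by
    intro a
    have hv := s17_vdeg_close N a
    have hy := hqc a
    set x := vdeg (sidonW N) a - D with hx
    set y := s17q N (a:ℕ) - c with hyy
    have hxy : |x - y| ≤ 6*(N:ℝ) := by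
      have e : x - y = (vdeg (sidonW N) a - s17q N (a:ℕ)) - (D - c) := by
        rw [hx, hyy]; ring
      rw [e]
      rw [abs_le] at hv hDc ⊢
      constructor <;> linarith [hv.1, hv.2, hDc.1, hDc.2]
    rw [abs_le] at hxy hy ⊢
    constructor <;> nlinarith [sq_nonneg (x - y), sq_nonneg (x + y)]
  have hvq : ∑ a : Fin N, (s17q N (a:ℕ) - c)^2
      = (N:ℝ)^5/720 - (N:ℝ)^3/144 + (N:ℝ)/180 := by
    rw [Fin.sum_univ_eq_sum_range (fun a => (s17q N a - c)^2) N]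
    have hcg : ∀ a ∈ Finset.range N,
        (s17q N a - c)^2 = ((N:ℝ)*s17q N a - s17Q N)^2/(N:ℝ)^2 := by
      intro a _
      rw [hc]; field_simp
    rw [Finset.sum_congr rfl hcg, ← Finset.sum_div, s17_var_q]
    field_simp
  have hS2 : |∑ a : Fin N, (vdeg (sidonW N) a - D)^2
      - ((N:ℝ)^5/720 - (N:ℝ)^3/144 + (N:ℝ)/180)| ≤ 60*(N:ℝ)^3*(N:ℝ) := by
    rw [← hvq, ← Finset.sum_sub_distrib]
    calc |∑ a : Fin N, ((vdeg (sidonW N) a - D)^2 - (s17q N (a:ℕ) - c)^2)|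
        ≤ ∑ a : Fin N, |(vdeg (sidonW N) a - D)^2 - (s17q N (a:ℕ) - c)^2| :=
          Finset.abs_sum_le_sum_abs _ _
      _ ≤ ∑ _a : Fin N, 60*(N:ℝ)^3 := Finset.sum_le_sum (fun a _ => hterm a)
      _ = 60*(N:ℝ)^3*(N:ℝ) := by
            rw [Finset.sum_const, Finset.card_univ, Fintype.card_fin, nsmul_eq_mul]
            ring
  have e2 : degVar (sidonW N) - (N:ℝ)^4/720
      = (∑ a : Fin N, (vdeg (sidonW N) a - D)^2
          - ((N:ℝ)^5/720 - (N:ℝ)^3/144 + (N:ℝ)/180))/N + (-(N:ℝ)^2/144 + 1/180) := by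
    unfold degVar
    rw [← hD]
    field_simp
    ring
  rw [e2]
  have h3 : |(∑ a : Fin N, (vdeg (sidonW N) a - D)^2
      - ((N:ℝ)^5/720 - (N:ℝ)^3/144 + (N:ℝ)/180))/N| ≤ 60*(N:ℝ)^3 := by
    rw [abs_div, abs_of_pos hN0, div_le_iff₀ hN0]
    nlinarith
  have h4 : |(-(N:ℝ)^2/144 + 1/180)| ≤ (N:ℝ)^3 := by
    rw [abs_le]; constructor <;> nlinarith
  calc |(∑ a : Fin N, (vdeg (sidonW N) a - D)^2
        - ((N:ℝ)^5/720 - (N:ℝ)^3/144 + (N:ℝ)/180))/N + (-(N:ℝ)^2/144 + 1/180)|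
      ≤ |(∑ a : Fin N, (vdeg (sidonW N) a - D)^2
          - ((N:ℝ)^5/720 - (N:ℝ)^3/144 + (N:ℝ)/180))/N| + |(-(N:ℝ)^2/144 + 1/180)| :=
        abs_add_le _ _
    _ ≤ 60*(N:ℝ)^3 + (N:ℝ)^3 := by linarith
    _ ≤ 73*(N:ℝ)^3 := by nlinarith

theorem statement17 :
    ∃ ε₁ ε₂ : ℕ → ℝ, Tendsto ε₁ atTop (nhds 0) ∧ Tendsto ε₂ atTop (nhds 0) ∧
      ∀ᶠ N in atTop,
        avgDeg (sidonW N) = (1 + ε₁ N) * ((N : ℝ) ^ 2 / 3) ∧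
        degVar (sidonW N) = (1 + ε₂ N) * ((N : ℝ) ^ 4 / 720) := by
  refine ⟨fun N => avgDeg (sidonW N) / ((N:ℝ)^2/3) - 1,
    fun N => degVar (sidonW N) / ((N:ℝ)^4/720) - 1, ?_, ?_, ?_⟩
  · apply squeeze_zero_norm' (a := fun n : ℕ => 12 / (n:ℝ))
    · filter_upwards [eventually_ge_atTop 1] with N hN
      have hN0 : (0:ℝ) < N := by exact_mod_cast hN
      have hrw : avgDeg (sidonW N) / ((N:ℝ)^2/3) - 1
          = (avgDeg (sidonW N) - (N:ℝ)^2/3) / ((N:ℝ)^2/3) := by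
        field_simp
      have hpos : (0:ℝ) < (N:ℝ)^2/3 := div_pos (pow_pos hN0 2) (by norm_num)
      rw [Real.norm_eq_abs, hrw, abs_div, abs_of_pos hpos]
      rw [div_le_iff₀ hpos]
      have h := s17_avg_close N hN
      have he : 12/(N:ℝ) * ((N:ℝ)^2/3) = 4*(N:ℝ) := by field_simp; ring
      linarith
    · exact s17_tendsto_const_div 12
  · apply squeeze_zero_norm' (a := fun n : ℕ => 52560 / (n:ℝ))
    · filter_upwards [eventually_ge_atTop 1] with N hN
      have hN0 : (0:ℝ) < N := by exact_mod_cast hN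
      have hrw : degVar (sidonW N) / ((N:ℝ)^4/720) - 1
          = (degVar (sidonW N) - (N:ℝ)^4/720) / ((N:ℝ)^4/720) := by
        field_simp
      have hpos : (0:ℝ) < (N:ℝ)^4/720 := div_pos (pow_pos hN0 4) (by norm_num)
      rw [Real.norm_eq_abs, hrw, abs_div, abs_of_pos hpos]
      rw [div_le_iff₀ hpos]
      have h := s17_var_close N hN
      have he : 52560/(N:ℝ) * ((N:ℝ)^4/720) = 73*(N:ℝ)^3 := by field_simp; ring
      linarith
    · exact s17_tendsto_const_div 52560
  · filter_upwards [eventually_ge_atTop 1] with N hN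
    have hN0 : (0:ℝ) < N := by exact_mod_cast hN
    have hX : ((N:ℝ)^2/3) ≠ 0 := ne_of_gt (div_pos (pow_pos hN0 2) (by norm_num))
    have hY : ((N:ℝ)^4/720) ≠ 0 := ne_of_gt (div_pos (pow_pos hN0 4) (by norm_num))
    constructor
    · rw [show (1 + (avgDeg (sidonW N) / ((N:ℝ)^2/3) - 1)) = avgDeg (sidonW N) / ((N:ℝ)^2/3)
        by ring, div_mul_cancel₀ _ hX]
    · rw [show (1 + (degVar (sidonW N) / ((N:ℝ)^4/720) - 1)) = degVar (sidonW N) / ((N:ℝ)^4/720)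
        by ring, div_mul_cancel₀ _ hY]

end Paper

end
end
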